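/- Let (X,d) be a continuous 𝕁-algebra and define the 𝓙-below distributor 𝔴 : X × X → [0,∞] by 𝔴(x,y) = sup over all bounded ideals φ of (X,d) of (φ(x) ⊖ d(y, colim φ)). Then for all x,y ∈ X and all r,s ∈ [0,∞), (x,r) is way below (y,s) in BX if and only if r > s + 𝔴(x,y). -/

import Mathlib

open scoped ENNReal NNReal

universe u v w

/-- A quasi-metric space structure on `X`: distances valued in `[0,∞]`, with
`d x x = 0`, the triangle inequality, and separatedness. -/
structure QuasiMetric (X : Type u) where
  d : X → X → ℝ≥0∞
  d_self : ∀ x, d x x = 0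
  d_triangle : ∀ x y z, d x z ≤ d x y + d y z
  d_separated : ∀ x y, d x y = 0 → d y x = 0 → x = y

namespace QuasiMetric

variable {X : Type u}

/-- The order on formal balls: `(x, r) ⊑ (y, s)` iff `s + d x y ≤ r`
(equivalently `d x y ≤ r - s`). -/
def ballLE (q : QuasiMetric X) (p p' : X × ℝ≥0) : Prop :=
  (p'.2 : ℝ≥0∞) + q.d p.1 p'.1 ≤ (p.2 : ℝ≥0∞)

/-- `b` is a least upper bound of the set `S` of formal balls. -/
def IsBallLUB (q : QuasiMetric X) (S : Set (X × ℝ≥0)) (b : X × ℝ≥0) : Prop :=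
  (∀ p ∈ S, q.ballLE p b) ∧ ∀ c, (∀ p ∈ S, q.ballLE p c) → q.ballLE b c

/-- `le` is a directed preorder (reflexive, transitive, directed). -/
def DirectedPre {D : Type v} (le : D → D → Prop) : Prop :=
  (∀ i, le i i) ∧ (∀ i j k, le i j → le j k → le i k) ∧ ∀ i j, ∃ k, le i k ∧ le j k

/-- A net `x : D → X` is forward Cauchy: `inf_i sup_{k ≥ j ≥ i} d (x j) (x k) = 0`. -/
def ForwardCauchy (q : QuasiMetric X) {D : Type v} (le : D → D → Prop) (x : D → X) : Prop :=
  (⨅ i, ⨆ j, ⨆ (_ : le i j), ⨆ k, ⨆ (_ : le j k), q.d (x j) (x k)) = 0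

/-- `a` is a Yoneda limit of the net `x : D → X`:
for all `y`, `d a y = inf_i sup_{j ≥ i} d (x j) y`. -/
def IsYonedaLimit (q : QuasiMetric X) {D : Type v} (le : D → D → Prop) (x : D → X) (a : X) :
    Prop :=
  ∀ y, q.d a y = ⨅ i, ⨆ j, ⨆ (_ : le i j), q.d (x j) y

/-- `(X, d)` is Yoneda complete: every forward Cauchy net has a Yoneda limit. -/
def YonedaComplete (q : QuasiMetric X) : Prop :=
  ∀ (D : Type u) (le : D → D → Prop), DirectedPre le → Nonempty D →
    ∀ x : D → X, q.ForwardCauchy le x → ∃ a, q.IsYonedaLimit le x a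

/-- `(X, d)` is standard: whenever a directed set of formal balls (viewed as a monotone
net indexed by itself) has a least upper bound, the corresponding forward Cauchy net of
centers has a Yoneda limit. -/
def Standard (q : QuasiMetric X) : Prop :=
  ∀ S : Set (X × ℝ≥0), S.Nonempty → DirectedOn q.ballLE S →
    (∃ b, q.IsBallLUB S b) →
    ∃ a, q.IsYonedaLimit (fun p p' : ↥S => q.ballLE p.1 p'.1) (fun p : ↥S => p.1.1) a

/-- A weight of `(X, d)`: `φ x ≤ φ y + d x y`. -/
def IsWeight (q : QuasiMetric X) (φ : X → ℝ≥0∞) : Prop :=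
  ∀ x y, φ x ≤ φ y + q.d x y

/-- The quasi-metric on weights: `ρ(φ, ψ) = sup_y (ψ y ⊖ φ y)`. -/
noncomputable def rho {Y : Type v} (φ ψ : Y → ℝ≥0∞) : ℝ≥0∞ := ⨆ y, ψ y - φ y

/-- An ideal of `(X, d)`: a weight `φ` with `inf φ = 0` such that
`ρ(φ, min (λ, μ)) = min (ρ(φ,λ), ρ(φ,μ))` for all weights `λ`, `μ`. -/
def IsIdeal (q : QuasiMetric X) (φ : X → ℝ≥0∞) : Prop :=
  q.IsWeight φ ∧ (⨅ x, φ x) = 0 ∧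
    ∀ l m : X → ℝ≥0∞, q.IsWeight l → q.IsWeight m →
      rho φ (fun x => min (l x) (m x)) = min (rho φ l) (rho φ m)

/-- A weight `φ` is bounded: there are `r < ∞` and `a ∈ X` with `d x a ≤ r + φ x` for all `x`. -/
def BoundedWeight (q : QuasiMetric X) (φ : X → ℝ≥0∞) : Prop :=
  ∃ (r : ℝ≥0) (a : X), ∀ x, q.d x a ≤ (r : ℝ≥0∞) + φ x

/-- `b` is a colimit of the weight `φ`: for all `y`, `d b y = sup_x (d x y ⊖ φ x)`. -/
def IsColimit (q : QuasiMetric X) (φ : X → ℝ≥0∞) (b : X) : Prop :=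
  ∀ y, q.d b y = ⨆ x, q.d x y - φ x

/-- The poset of formal balls is a dcpo: every (nonempty) directed subset has a lub. -/
def BallDcpo (q : QuasiMetric X) : Prop :=
  ∀ S : Set (X × ℝ≥0), S.Nonempty → DirectedOn q.ballLE S → ∃ b, q.IsBallLUB S b

/-- The poset of formal balls is a local dcpo: every (nonempty) directed subset with an
upper bound has a lub. -/
def BallLocalDcpo (q : QuasiMetric X) : Prop :=
  ∀ S : Set (X × ℝ≥0), S.Nonempty → DirectedOn q.ballLE S →
    (∃ c, ∀ p ∈ S, q.ballLE p c) → ∃ b, q.IsBallLUB S b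

/-- `u` is way below `v` in the poset of formal balls. -/
def ballWayBelow (q : QuasiMetric X) (u v : X × ℝ≥0) : Prop :=
  ∀ S : Set (X × ℝ≥0), S.Nonempty → DirectedOn q.ballLE S →
    ∀ s, q.IsBallLUB S s → q.ballLE v s → ∃ p ∈ S, q.ballLE u p

/-- The poset of formal balls is a continuous poset: for every `p`, the set of elements
way below `p` is (nonempty) directed and has `p` as its least upper bound. -/
def BallContinuousPoset (q : QuasiMetric X) : Prop :=
  ∀ p : X × ℝ≥0,
    {u : X × ℝ≥0 | q.ballWayBelow u p}.Nonempty ∧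
    DirectedOn q.ballLE {u : X × ℝ≥0 | q.ballWayBelow u p} ∧
    q.IsBallLUB {u : X × ℝ≥0 | q.ballWayBelow u p} p

/-- A function `χ` is `𝓙`-closed: `ρ(ψ, χ) ≥ χ (colim ψ)` for every bounded ideal `ψ`
possessing a colimit. -/
def JClosed (q : QuasiMetric X) (χ : X → ℝ≥0∞) : Prop :=
  ∀ ψ : X → ℝ≥0∞, q.IsIdeal ψ → q.BoundedWeight ψ → ∀ c, q.IsColimit ψ c → χ c ≤ rho ψ χ

/-- `(X, d)` is a continuous `𝕁`-algebra: every bounded ideal has a colimit, and there is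
a map `⇓` assigning to each `x` a bounded ideal `⇓x` with `ρ(⇓x, φ) = d x (colim φ)` for
all `x` and all bounded ideals `φ`. -/
def ContinuousJAlgebra (q : QuasiMetric X) : Prop :=
  ∃ colim : (X → ℝ≥0∞) → X,
    (∀ φ, q.IsIdeal φ → q.BoundedWeight φ → q.IsColimit φ (colim φ)) ∧
    ∃ w : X → X → ℝ≥0∞,
      (∀ x, q.IsIdeal (w x) ∧ q.BoundedWeight (w x)) ∧
      ∀ (x : X) (φ : X → ℝ≥0∞), q.IsIdeal φ → q.BoundedWeight φ →
        rho (w x) φ = q.d x (colim φ)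

/-- The quasi-metric space of all functions `X → [0,∞]` satisfying a predicate `P`
(e.g. the bounded weights, or the bounded ideals), with the quasi-metric
`ρ(φ, ψ) = sup_x (ψ x ⊖ φ x)`. -/
noncomputable def weightSpace (q : QuasiMetric X) (P : (X → ℝ≥0∞) → Prop) :
    QuasiMetric {φ : X → ℝ≥0∞ // P φ} where
  d φ ψ := rho φ.1 ψ.1
  d_self φ := by simp [rho]
  d_triangle φ ψ χ := by
    refine iSup_le fun x => ?_
    calc χ.1 x - φ.1 x ≤ (χ.1 x - ψ.1 x) + (ψ.1 x - φ.1 x) := tsub_le_tsub_add_tsub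
    _ ≤ rho ψ.1 χ.1 + rho φ.1 ψ.1 :=
        add_le_add (le_iSup (fun y => χ.1 y - ψ.1 y) x) (le_iSup (fun y => ψ.1 y - φ.1 y) x)
    _ = rho φ.1 ψ.1 + rho ψ.1 χ.1 := add_comm _ _
  d_separated φ ψ h1 h2 := by
    apply Subtype.ext
    funext x
    have hx1 : ψ.1 x - φ.1 x ≤ 0 := by
      rw [← h1]; exact le_iSup (fun y => ψ.1 y - φ.1 y) x
    have hx2 : φ.1 x - ψ.1 x ≤ 0 := by
      rw [← h2]; exact le_iSup (fun y => φ.1 y - ψ.1 y) x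
    exact le_antisymm (tsub_eq_zero_iff_le.mp (le_antisymm hx2 (zero_le)))
      (tsub_eq_zero_iff_le.mp (le_antisymm hx1 (zero_le)))

end QuasiMetric

/-!
In a continuous 𝕁-algebra the supremum defining `𝔴(x, y)` is attained at `⇓y`: since
`φ x ⊖ ⇓y x ≤ ρ(⇓y, φ) = d(y, colim φ)` and `d(y, colim ⇓y) = ρ(⇓y, ⇓y) = 0`, we get
`𝔴(x, y) = ⇓y x`.

If `(x, r) ≪ (y, s)`, consider the formal balls `(u, t)` with `s + ⇓y u < t`. They form a
directed set because `⇓y` is an ideal, and its least upper bound is `(colim ⇓y, s)`, which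
lies above `(y, s)`. Some member of it lies above `(x, r)`, which forces `s + ⇓y x < r`.

Conversely, let `S` be a directed set of formal balls whose least upper bound lies above
`(y, s)`, and let `t` be the infimum of the radii in `S`. Then
`φ u = inf_{(v, a) ∈ S} (d(u, v) + (a - t))` is a bounded ideal and `(colim φ, t)` is an
upper bound of `S`, so `t + d(y, colim φ) ≤ s`. Hence `φ x + t ≤ s + 𝔴(x, y) < r`, and a
ball of `S` with `d(x, v) + a < r` witnesses that `(x, r) ≪ (y, s)`.
-/

theorem iSup_min_of_directed {α : Type w} [CompleteLinearOrder α] {ι : Sort v} [Nonempty ι]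
    {R : ι → ι → Prop} (hdir : ∀ i j, ∃ k, R i k ∧ R j k) {f g : ι → α}
    (hf : ∀ i j, R i j → f i ≤ f j) (hg : ∀ i j, R i j → g i ≤ g j) :
    ⨆ i, min (f i) (g i) = min (⨆ i, f i) (⨆ i, g i) := by
  refine le_antisymm (iSup_le fun i => min_le_min (le_iSup f i) (le_iSup g i)) ?_
  refine le_of_forall_lt fun c hc => ?_
  rw [lt_min_iff, lt_iSup_iff, lt_iSup_iff] at hc
  obtain ⟨⟨i, hi⟩, ⟨j, hj⟩⟩ := hc
  obtain ⟨k, hik, hjk⟩ := hdir i j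
  exact lt_iSup_iff.2 ⟨k, lt_min (hi.trans_le (hf _ _ hik)) (hj.trans_le (hg _ _ hjk))⟩

namespace QuasiMetric

variable {X : Type u} {q : QuasiMetric X}

theorem sub_le_rho {Y : Type v} (φ ψ : Y → ℝ≥0∞) (y : Y) : ψ y - φ y ≤ rho φ ψ :=
  le_iSup (fun z => ψ z - φ z) y

theorem rho_self {Y : Type v} (φ : Y → ℝ≥0∞) : rho φ φ = 0 := by
  simp [rho]

theorem ballLE_trans {p p' p'' : X × ℝ≥0} (h : q.ballLE p p') (h' : q.ballLE p' p'') :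
    q.ballLE p p'' := by
  unfold ballLE at *
  calc (p''.2 : ℝ≥0∞) + q.d p.1 p''.1
      ≤ (p''.2 + q.d p'.1 p''.1) + q.d p.1 p'.1 := by
        rw [add_assoc, add_comm (q.d p'.1 p''.1)]
        gcongr
        exact q.d_triangle _ _ _
    _ ≤ p'.2 + q.d p.1 p'.1 := by gcongr
    _ ≤ p.2 := h

theorem ballLE_of_radius_le {p : X × ℝ≥0} {u : X} {σ σ' : ℝ≥0} (h : q.ballLE p (u, σ))
    (hσ : σ' ≤ σ) : q.ballLE p (u, σ') :=
  le_trans (by gcongr) h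

theorem ballLE_sub_radius {p p' : X × ℝ≥0} {t : ℝ≥0} (h : q.ballLE p p') (ht : t ≤ p'.2) :
    q.ballLE (p.1, p.2 - t) (p'.1, p'.2 - t) := by
  unfold ballLE at *
  simp only [ENNReal.coe_sub]
  rw [ENNReal.sub_add_eq_add_sub (ENNReal.coe_le_coe.2 ht) ENNReal.coe_ne_top]
  exact tsub_le_tsub_right h _

theorem exists_ballLE_radius_gt {c : ℝ≥0∞} {v u : X} {a : ℝ≥0} (h : c + q.d v u < a) :
    ∃ σ : ℝ≥0, c < σ ∧ q.ballLE (v, a) (u, σ) := by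
  have hd : q.d v u ≠ ∞ := ne_top_of_lt (le_add_self.trans_lt h)
  refine ⟨a - (q.d v u).toNNReal, ?_, ?_⟩ <;>
    simp only [ballLE, ENNReal.coe_sub, ENNReal.coe_toNNReal hd]
  · exact lt_tsub_iff_right.2 h
  · exact (tsub_add_cancel_of_le (le_add_self.trans h.le)).le

theorem IsColimit.d_le {φ : X → ℝ≥0∞} {b : X} (h : q.IsColimit φ b) (u : X) :
    q.d u b ≤ φ u := by
  have h0 : q.d u b - φ u ≤ q.d b b := by
    rw [h b]; exact le_iSup (fun v => q.d v b - φ v) u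
  rwa [q.d_self, nonpos_iff_eq_zero, tsub_eq_zero_iff_le] at h0

theorem isWeight_sub_d (z : X) (C : ℝ≥0∞) : q.IsWeight fun u => C - q.d z u := by
  intro u v
  rw [tsub_le_iff_right, add_right_comm, add_assoc]
  calc C ≤ (C - q.d z v) + q.d z v := le_tsub_add
    _ ≤ (C - q.d z v) + (q.d z u + q.d u v) := by gcongr; exact q.d_triangle z u v

theorem IsWeight.min {l m : X → ℝ≥0∞} (hl : q.IsWeight l) (hm : q.IsWeight m) :
    q.IsWeight fun u => min (l u) (m u) := fun u v =>
  (min_le_min (hl u v) (hm u v)).trans_eq (min_add_add_right _ _ _)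

theorem IsWeight.sub_le_sub_of_ballLE {ψ : X → ℝ≥0∞} (hψ : q.IsWeight ψ) {p p' : X × ℝ≥0}
    (h : q.ballLE p p') : ψ p.1 - p.2 ≤ ψ p'.1 - p'.2 :=
  calc ψ p.1 - p.2 ≤ ψ p.1 - (p'.2 + q.d p.1 p'.1) := tsub_le_tsub_left h _
    _ = (ψ p.1 - q.d p.1 p'.1) - p'.2 := by rw [add_comm, tsub_add_eq_tsub_tsub]
    _ ≤ ψ p'.1 - p'.2 := tsub_le_tsub_right (tsub_le_iff_right.2 (hψ _ _)) _

def idealBalls (ψ : X → ℝ≥0∞) (s : ℝ≥0) : Set (X × ℝ≥0) :=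
  {p | (s : ℝ≥0∞) + ψ p.1 < p.2}

section IdealBalls

variable {ψ : X → ℝ≥0∞}

theorem idealBalls_nonempty (hψ : ⨅ u, ψ u = 0) (s : ℝ≥0) : (idealBalls ψ s).Nonempty := by
  obtain ⟨u, hu⟩ := iInf_lt_iff.1 (hψ.trans_lt zero_lt_one)
  refine ⟨(u, s + 1), show (s : ℝ≥0∞) + ψ u < ↑(s + 1) from ?_⟩
  push_cast
  exact ENNReal.add_lt_add_left ENNReal.coe_ne_top hu

theorem directedOn_idealBalls (hψ : q.IsIdeal ψ) (s : ℝ≥0) :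
    DirectedOn q.ballLE (idealBalls ψ s) := by
  rintro ⟨v₁, a₁⟩ h₁ ⟨v₂, a₂⟩ h₂
  let l : X → ℝ≥0 → X → ℝ≥0∞ := fun v a u => ((a : ℝ≥0∞) - s) - q.d v u
  have hpos : ∀ (v : X) (a : ℝ≥0), (s : ℝ≥0∞) + ψ v < a → 0 < rho ψ (l v a) := fun v a h =>
    (tsub_pos_of_lt (by simpa [l, q.d_self] using lt_tsub_iff_left.2 h)).trans_le
      (sub_le_rho _ _ v)
  -- the ideal property merges the two positive distances into one witness `u`
  have hmin : 0 < rho ψ fun u => min (l v₁ a₁ u) (l v₂ a₂ u) := by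
    rw [hψ.2.2 _ _ (isWeight_sub_d v₁ _) (isWeight_sub_d v₂ _)]
    exact lt_min (hpos _ _ h₁) (hpos _ _ h₂)
  obtain ⟨u, hu⟩ := lt_iSup_iff.1 hmin
  rw [tsub_pos_iff_lt, lt_min_iff] at hu
  have hball : ∀ (v : X) (a : ℝ≥0), ψ u < l v a u → ((s : ℝ≥0∞) + ψ u) + q.d v u < a :=
    fun v a h => by rw [add_assoc]; exact lt_tsub_iff_left.1 (lt_tsub_iff_right.1 h)
  obtain ⟨σ₁, hs₁, hb₁⟩ := exists_ballLE_radius_gt (hball _ _ hu.1)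
  obtain ⟨σ₂, hs₂, hb₂⟩ := exists_ballLE_radius_gt (hball _ _ hu.2)
  refine ⟨(u, min σ₁ σ₂), ?_, ballLE_of_radius_le hb₁ (min_le_left _ _),
    ballLE_of_radius_le hb₂ (min_le_right _ _)⟩
  show (s : ℝ≥0∞) + ψ u < ↑(min σ₁ σ₂)
  rw [ENNReal.coe_min]
  exact lt_min hs₁ hs₂

theorem add_d_le_of_upperBound_idealBalls {s : ℝ≥0} {c : X × ℝ≥0}
    (hc : ∀ p ∈ idealBalls ψ s, q.ballLE p c) (u : X) : c.2 + q.d u c.1 ≤ s + ψ u := by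
  refine ENNReal.le_of_forall_pos_le_add fun ε hε hfin => ?_
  have hmem : (u, (s + ψ u).toNNReal + ε) ∈ idealBalls ψ s := by
    simpa [idealBalls, ENNReal.coe_toNNReal hfin.ne] using ENNReal.lt_add_right hfin.ne
      (ENNReal.coe_ne_zero.2 hε.ne')
  simpa [ballLE, ENNReal.coe_toNNReal hfin.ne] using hc _ hmem

theorem isBallLUB_idealBalls (hψ : ⨅ u, ψ u = 0) {b : X} (hb : q.IsColimit ψ b) (s : ℝ≥0) :
    q.IsBallLUB (idealBalls ψ s) (b, s) := by
  refine ⟨fun p hp => ?_, fun c hc => ?_⟩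
  · calc (s : ℝ≥0∞) + q.d p.1 b ≤ s + ψ p.1 := by gcongr; exact hb.d_le p.1
      _ ≤ p.2 := le_of_lt hp
  have hle := add_d_le_of_upperBound_idealBalls hc
  have hcs : (c.2 : ℝ≥0∞) ≤ s := by
    rw [← add_zero (s : ℝ≥0∞), ← hψ, ENNReal.add_iInf]
    exact le_iInf fun u => le_self_add.trans (hle u)
  show (c.2 : ℝ≥0∞) + q.d b c.1 ≤ s
  have : Nonempty X := ⟨b⟩
  rw [hb c.1, ENNReal.add_iSup]
  refine iSup_le fun u => ?_
  calc (c.2 : ℝ≥0∞) + (q.d u c.1 - ψ u) ≤ c.2 + (s - c.2) := by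
        refine add_le_add_right ?_ _
        rw [tsub_le_iff_right]
        exact (ENNReal.le_sub_of_add_le_left ENNReal.coe_ne_top (hle u)).trans
          add_tsub_le_tsub_add
    _ = s := add_tsub_cancel_of_le hcs

theorem add_lt_of_ballWayBelow (hψ : q.IsIdeal ψ) {b : X} (hb : q.IsColimit ψ b) {x y : X}
    (hyb : q.d y b = 0) {r s : ℝ≥0} (hxy : q.ballWayBelow (x, r) (y, s)) :
    (s : ℝ≥0∞) + ψ x < r := by
  obtain ⟨p, hp, hxp⟩ := hxy _ (idealBalls_nonempty hψ.2.1 s) (directedOn_idealBalls hψ s) _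
    (isBallLUB_idealBalls hψ.2.1 hb s) (by simp [ballLE, hyb])
  have hd : q.d x p.1 ≠ ∞ := ne_top_of_le_ne_top ENNReal.coe_ne_top (le_add_self.trans hxp)
  calc (s : ℝ≥0∞) + ψ x ≤ (s + ψ p.1) + q.d x p.1 := by
        rw [add_assoc]; gcongr; exact hψ.1 x p.1
    _ < p.2 + q.d x p.1 := ENNReal.add_lt_add_right hd hp
    _ ≤ r := hxp

end IdealBalls

noncomputable def infRadius (S : Set (X × ℝ≥0)) : ℝ≥0 := ⨅ p : S, p.1.2

noncomputable def ballsWeight (q : QuasiMetric X) (S : Set (X × ℝ≥0)) (u : X) : ℝ≥0∞ :=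
  ⨅ p : S, q.d u p.1.1 + ↑(p.1.2 - infRadius S)

section BallsWeight

variable {S : Set (X × ℝ≥0)}

theorem infRadius_le {p : X × ℝ≥0} (hp : p ∈ S) : infRadius S ≤ p.2 :=
  ciInf_le (OrderBot.bddBelow _) (⟨p, hp⟩ : S)

theorem ballsWeight_le {p : X × ℝ≥0} (hp : p ∈ S) (u : X) :
    q.ballsWeight S u ≤ q.d u p.1 + ↑(p.2 - infRadius S) :=
  iInf_le (fun p : S => q.d u p.1.1 + ↑(p.1.2 - infRadius S)) ⟨p, hp⟩

theorem ballsWeight_add_infRadius (u : X) :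
    q.ballsWeight S u + infRadius S = ⨅ p : S, q.d u p.1.1 + p.1.2 := by
  rw [ballsWeight, ENNReal.iInf_add]
  refine iInf_congr fun p => ?_
  rw [add_assoc, ← ENNReal.coe_add, tsub_add_cancel_of_le (infRadius_le p.2)]

theorem isWeight_ballsWeight : q.IsWeight (q.ballsWeight S) := by
  intro u v
  rw [← tsub_le_iff_right]
  refine le_iInf fun p => tsub_le_iff_right.2 ?_
  calc q.ballsWeight S u ≤ q.d u p.1.1 + ↑(p.1.2 - infRadius S) := ballsWeight_le p.2 u
    _ ≤ (q.d u v + q.d v p.1.1) + ↑(p.1.2 - infRadius S) := by gcongr; exact q.d_triangle _ _ _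
    _ = (q.d v p.1.1 + ↑(p.1.2 - infRadius S)) + q.d u v := by ring

theorem iInf_ballsWeight (hS : S.Nonempty) : ⨅ u, q.ballsWeight S u = 0 := by
  have : Nonempty S := hS.to_subtype
  refine nonpos_iff_eq_zero.1 (ENNReal.le_of_forall_pos_le_add fun ε hε _ => ?_)
  obtain ⟨⟨p, hp⟩, hlt⟩ := exists_lt_of_ciInf_lt (lt_add_of_pos_right (infRadius S) hε)
  calc ⨅ u, q.ballsWeight S u ≤ q.ballsWeight S p.1 := iInf_le _ _
    _ ≤ ↑(p.2 - infRadius S) := by simpa [q.d_self] using ballsWeight_le (q := q) hp p.1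
    _ ≤ 0 + ε := by rw [zero_add, ENNReal.coe_le_coe]; exact tsub_le_iff_left.2 hlt.le

theorem rho_ballsWeight {ψ : X → ℝ≥0∞} (hψ : q.IsWeight ψ) :
    rho (q.ballsWeight S) ψ = ⨆ p : S, ψ p.1.1 - ↑(p.1.2 - infRadius S) := by
  refine le_antisymm (iSup_le fun u => ?_) (iSup_le fun p => ?_)
  · rw [ballsWeight, ENNReal.sub_iInf]
    refine iSup_mono fun p => ?_
    rw [tsub_add_eq_tsub_tsub]
    exact tsub_le_tsub_right (tsub_le_iff_right.2 (hψ u p.1.1)) _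
  · refine le_trans ?_ (sub_le_rho _ ψ p.1.1)
    exact tsub_le_tsub_left (by simpa [q.d_self] using ballsWeight_le (q := q) p.2 p.1.1) _

theorem isIdeal_ballsWeight (hS : S.Nonempty) (hdir : DirectedOn q.ballLE S) :
    q.IsIdeal (q.ballsWeight S) := by
  refine ⟨isWeight_ballsWeight, iInf_ballsWeight hS, fun l m hl hm => ?_⟩
  have : Nonempty S := hS.to_subtype
  have hmono : ∀ {ψ}, q.IsWeight ψ → ∀ p p' : S, q.ballLE p.1 p'.1 →
      ψ p.1.1 - ↑(p.1.2 - infRadius S) ≤ ψ p'.1.1 - ↑(p'.1.2 - infRadius S) :=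
    fun hψ p p' h => hψ.sub_le_sub_of_ballLE (ballLE_sub_radius h (infRadius_le p'.2))
  rw [rho_ballsWeight hl, rho_ballsWeight hm, rho_ballsWeight (hl.min hm)]
  have min_tsub : ∀ a b c : ℝ≥0∞, min a b - c = min (a - c) (b - c) := fun _ _ c =>
    Monotone.map_min fun _ _ h => tsub_le_tsub_right h c
  simp only [min_tsub]
  refine iSup_min_of_directed (R := fun p p' : S => q.ballLE p.1 p'.1) (fun p p' => ?_)
    (hmono hl) (hmono hm)
  obtain ⟨k, hk, h₁, h₂⟩ := hdir p.1 p.2 p'.1 p'.2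
  exact ⟨⟨k, hk⟩, h₁, h₂⟩

theorem boundedWeight_ballsWeight (hS : S.Nonempty) {L : X × ℝ≥0}
    (hL : ∀ p ∈ S, q.ballLE p L) : q.BoundedWeight (q.ballsWeight S) := by
  have : Nonempty S := hS.to_subtype
  have hLt : L.2 ≤ infRadius S := le_ciInf fun p => by
    exact_mod_cast le_self_add.trans (hL p.1 p.2)
  refine ⟨infRadius S - L.2, L.1, fun u => ?_⟩
  rw [← tsub_le_iff_left]
  refine le_iInf fun p => tsub_le_iff_left.2 ?_
  have hdp : q.d p.1.1 L.1 ≤ ↑(p.1.2 - L.2) := by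
    rw [ENNReal.coe_sub]
    exact ENNReal.le_sub_of_add_le_left ENNReal.coe_ne_top (hL p.1 p.2)
  calc q.d u L.1 ≤ q.d u p.1.1 + q.d p.1.1 L.1 := q.d_triangle _ _ _
    _ ≤ q.d u p.1.1 + ↑(p.1.2 - L.2) := by gcongr
    _ = ↑(infRadius S - L.2) + (q.d u p.1.1 + ↑(p.1.2 - infRadius S)) := by
      rw [← tsub_add_tsub_cancel (infRadius_le p.2) hLt, ENNReal.coe_add]
      ring

theorem IsColimit.ballLE_ballsWeight {b : X} (hb : q.IsColimit (q.ballsWeight S) b)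
    {p : X × ℝ≥0} (hp : p ∈ S) : q.ballLE p (b, infRadius S) :=
  calc (infRadius S : ℝ≥0∞) + q.d p.1 b ≤ infRadius S + ↑(p.2 - infRadius S) := by
        gcongr
        simpa [q.d_self] using (hb.d_le p.1).trans (ballsWeight_le hp p.1)
    _ = p.2 := by rw [← ENNReal.coe_add, add_tsub_cancel_of_le (infRadius_le hp)]

end BallsWeight

/-- The `𝓙`-below distributor `𝔴(x, y)`. -/
noncomputable def jBelow (q : QuasiMetric X) (colim : (X → ℝ≥0∞) → X) (x y : X) : ℝ≥0∞ :=
  ⨆ φ : {φ : X → ℝ≥0∞ // q.IsIdeal φ ∧ q.BoundedWeight φ}, (φ.1 x - q.d y (colim φ.1))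

section JBelow

variable {colim : (X → ℝ≥0∞) → X}

theorem le_jBelow_add {φ : X → ℝ≥0∞} (hφ : q.IsIdeal φ ∧ q.BoundedWeight φ) (x y : X) :
    φ x ≤ q.jBelow colim x y + q.d y (colim φ) :=
  tsub_le_iff_right.1 <|
    le_iSup (fun φ : {φ // q.IsIdeal φ ∧ q.BoundedWeight φ} => φ.1 x - q.d y (colim φ.1))
      ⟨φ, hφ⟩

theorem jBelow_eq_of_rho_eq {y : X} {w : X → ℝ≥0∞} (hw : q.IsIdeal w ∧ q.BoundedWeight w)
    (hwRho : ∀ φ, q.IsIdeal φ → q.BoundedWeight φ → rho w φ = q.d y (colim φ)) (x : X) :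
    q.jBelow colim x y = w x := by
  refine le_antisymm (iSup_le fun φ => ?_) ?_
  · rw [← hwRho φ.1 φ.2.1 φ.2.2, tsub_le_iff_right, add_comm]
    exact tsub_le_iff_right.1 (sub_le_rho w φ.1 x)
  · simpa [← hwRho w hw.1 hw.2, rho_self] using le_jBelow_add (colim := colim) hw x y

theorem ballWayBelow_of_add_jBelow_lt
    (hcolim : ∀ φ, q.IsIdeal φ → q.BoundedWeight φ → q.IsColimit φ (colim φ)) {x y : X}
    {r s : ℝ≥0} (h : s + q.jBelow colim x y < r) : q.ballWayBelow (x, r) (y, s) := by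
  intro S hS hdir L hL hyL
  have hφ : q.IsIdeal (q.ballsWeight S) ∧ q.BoundedWeight (q.ballsWeight S) :=
    ⟨isIdeal_ballsWeight hS hdir, boundedWeight_ballsWeight hS hL.1⟩
  have hy : q.ballLE (y, s) (colim (q.ballsWeight S), infRadius S) :=
    ballLE_trans hyL (hL.2 _ fun p hp => (hcolim _ hφ.1 hφ.2).ballLE_ballsWeight hp)
  have hx : q.ballsWeight S x + infRadius S < r :=
    calc q.ballsWeight S x + infRadius S
        ≤ q.jBelow colim x y + q.d y (colim (q.ballsWeight S)) + infRadius S := by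
          gcongr; exact le_jBelow_add hφ x y
      _ = q.jBelow colim x y + (infRadius S + q.d y (colim (q.ballsWeight S))) := by ring
      _ ≤ q.jBelow colim x y + s := by gcongr; exact hy
      _ < r := by rwa [add_comm]
  rw [ballsWeight_add_infRadius, iInf_lt_iff] at hx
  obtain ⟨⟨p, hp⟩, hlt⟩ := hx
  exact ⟨p, hp, (add_comm _ _).trans_le hlt.le⟩

end JBelow

end QuasiMetric

open QuasiMetric in
/-- in a continuous `𝕁`-algebra, with the `𝓙`-below distributor
`𝔴(x, y) = sup_{φ bounded ideal} (φ x ⊖ d (y, colim φ))`, one has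
`(x, r) ≪ (y, s)` in `BX` iff `r > s + 𝔴(x, y)`. -/
theorem stmt19 {X : Type u} (q : QuasiMetric X)
    (colim : (X → ℝ≥0∞) → X)
    (hcolim : ∀ φ, q.IsIdeal φ → q.BoundedWeight φ → q.IsColimit φ (colim φ))
    (w : X → X → ℝ≥0∞)
    (hwIdeal : ∀ x, q.IsIdeal (w x) ∧ q.BoundedWeight (w x))
    (hwRho : ∀ (x : X) (φ : X → ℝ≥0∞), q.IsIdeal φ → q.BoundedWeight φ →
      rho (w x) φ = q.d x (colim φ)) :
    ∀ (x y : X) (r s : ℝ≥0),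
      q.ballWayBelow (x, r) (y, s) ↔
        (s : ℝ≥0∞) + (⨆ φ : {φ : X → ℝ≥0∞ // q.IsIdeal φ ∧ q.BoundedWeight φ},
            (φ.1 x - q.d y (colim φ.1))) < (r : ℝ≥0∞) := by
  intro x y r s
  have hdy : q.d y (colim (w y)) = 0 := by
    rw [← hwRho y (w y) (hwIdeal y).1 (hwIdeal y).2, rho_self]
  refine ⟨fun hxy => ?_, ballWayBelow_of_add_jBelow_lt hcolim⟩
  show (s : ℝ≥0∞) + q.jBelow colim x y < r
  rw [jBelow_eq_of_rho_eq (hwIdeal y) (hwRho y) x]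
  exact add_lt_of_ballWayBelow (hwIdeal y).1 (hcolim _ (hwIdeal y).1 (hwIdeal y).2) hdy hxy
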